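/- For any uncertainty frame F = ⟨W, μ⟩: F validates the formula disj0, i.e., ~_G Bp →_G △(Bp' ↔_G B(p∨p')), if and only if for all Y, Y' ⊆ W: μ(Y) = 0 implies μ(Y∪Y') = μ(Y'). -/

import Mathlib

/-- Classical propositional formulas (over `~` and `∧`). -/
inductive CPForm : Type
  | atom : ℕ → CPForm
  | neg  : CPForm → CPForm
  | and  : CPForm → CPForm → CPForm

/-- Boolean evaluation of classical formulas. -/
def cpeval (v : ℕ → Bool) : CPForm → Bool
  | .atom n => v n
  | .neg φ => !(cpeval v φ)
  | .and φ ψ => cpeval v φ && cpeval v ψ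

/-- `φ` is a classical tautology. -/
def CPTaut (φ : CPForm) : Prop := ∀ v : ℕ → Bool, cpeval v φ = true

/-- The extension `‖φ‖` of a classical formula in a model with valuation `v`. -/
def cpset {W : Type} (v : ℕ → Set W) : CPForm → Set W
  | .atom n => v n
  | .neg φ => (cpset v φ)ᶜ
  | .and φ ψ => cpset v φ ∩ cpset v ψ

/-- Defined classical implication `φ ⊃ ψ := ~(φ ∧ ~ψ)`. -/
def cpImp (φ ψ : CPForm) : CPForm := (φ.and ψ.neg).neg

/-- Defined classical disjunction `φ ∨ ψ := ~(~φ ∧ ~ψ)`. -/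
def cpOr (φ ψ : CPForm) : CPForm := ((φ.neg).and ψ.neg).neg

/-- A classical contradiction `p ∧ ~p`. -/
def cpBot : CPForm := (CPForm.atom 0).and (CPForm.atom 0).neg

/-- A classical tautology `~(p ∧ ~p)`. -/
def cpTop : CPForm := cpBot.neg

/-- Formulas of the language `L_QG`: atoms `B φ` for classical `φ`,
closed under `∧`, `∨`, `→_G`, `⤙_G`. -/
inductive QGForm : Type
  | bel   : CPForm → QGForm
  | and   : QGForm → QGForm → QGForm
  | or    : QGForm → QGForm → QGForm
  | imp   : QGForm → QGForm → QGForm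
  | coimp : QGForm → QGForm → QGForm

/-- Gödel implication on `[0,1] ⊆ ℝ`. -/
noncomputable def gimp (a b : ℝ) : ℝ := if a ≤ b then 1 else b

/-- Gödel co-implication on `[0,1] ⊆ ℝ`. -/
noncomputable def gcoimp (a b : ℝ) : ℝ := if a ≤ b then 0 else a

/-- The bi-Gödel valuation of `L_QG` formulas in a QG model given by measure `μ`
and classical valuation `v`: `e(Bφ) = μ(‖φ‖)`. -/
noncomputable def qgeval {W : Type} (μ : Set W → ℝ) (v : ℕ → Set W) : QGForm → ℝ
  | .bel φ => μ (cpset v φ)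
  | .and α β => min (qgeval μ v α) (qgeval μ v β)
  | .or α β => max (qgeval μ v α) (qgeval μ v β)
  | .imp α β => gimp (qgeval μ v α) (qgeval μ v β)
  | .coimp α β => gcoimp (qgeval μ v α) (qgeval μ v β)

/-- `μ` is an uncertainty measure on `W`: `[0,1]`-valued, monotone w.r.t. `⊆`,
and `μ(W) > μ(∅)`. -/
def IsUncertainty {W : Type} (μ : Set W → ℝ) : Prop :=
  (∀ X : Set W, μ X ∈ Set.Icc (0:ℝ) 1) ∧ Monotone μ ∧ μ ∅ < μ Set.univ

/-- `⊤_G` in `L_QG`. -/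
def qTop : QGForm := (QGForm.bel (CPForm.atom 0)).imp (QGForm.bel (CPForm.atom 0))
/-- `⊥_G` in `L_QG`. -/
def qBot : QGForm := (QGForm.bel (CPForm.atom 0)).coimp (QGForm.bel (CPForm.atom 0))
/-- Gödel negation `~_G α := α →_G ⊥_G`. -/
def qNot (α : QGForm) : QGForm := α.imp qBot
/-- `△α := (⊤_G ⤙_G α) →_G ⊥_G`. -/
def qDelta (α : QGForm) : QGForm := (qTop.coimp α).imp qBot
/-- `α ↔_G β := (α →_G β) ∧ (β →_G α)`. -/
def qIff (α β : QGForm) : QGForm := (α.imp β).and (β.imp α)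

/-- Validity of an `L_QG` formula on an uncertainty frame `⟨W, μ⟩`:
value `1` in every QG model on the frame. -/
def QGValidOnFrame {W : Type} (μ : Set W → ℝ) (α : QGForm) : Prop :=
  ∀ v : ℕ → Set W, qgeval μ v α = 1

/-- The atom `p`. -/
def pa : CPForm := CPForm.atom 0
/-- The atom `p'`. -/
def pb : CPForm := CPForm.atom 1

/-- The formula `disj0`: `~_G Bp →_G △(Bp' ↔_G B(p∨p'))`. -/
def disjZero : QGForm :=
  (qNot (QGForm.bel pa)).imp
    (qDelta (qIff (QGForm.bel pb) (QGForm.bel (cpOr pa pb))))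

lemma gimp_ite_eq_one_iff (p q : Prop) [Decidable p] [Decidable q] :
    gimp (if p then 1 else 0) (if q then 1 else 0) = 1 ↔ (p → q) := by
  unfold gimp
  by_cases hp : p <;> by_cases hq : q <;> simp [hp, hq]

lemma one_le_gimp_iff {a b : ℝ} (ha : a ≤ 1) : 1 ≤ gimp a b ↔ a ≤ b := by
  unfold gimp
  split_ifs with hab
  · simpa using hab
  · exact ⟨fun h => absurd (ha.trans h) hab, fun h => absurd h hab⟩

section Semantics

variable {W : Type} (μ : Set W → ℝ) (v : ℕ → Set W)

lemma cpset_cpOr (φ ψ : CPForm) : cpset v (cpOr φ ψ) = cpset v φ ∪ cpset v ψ := by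
  simp only [cpOr, cpset, Set.compl_inter, compl_compl]

lemma qgeval_qBot : qgeval μ v qBot = 0 := by
  simp [qBot, qgeval, gcoimp]

lemma qgeval_qTop : qgeval μ v qTop = 1 := by
  simp [qTop, qgeval, gimp]

lemma qgeval_qNot {α : QGForm} (hα : 0 ≤ qgeval μ v α) :
    qgeval μ v (qNot α) = if qgeval μ v α = 0 then 1 else 0 := by
  simp only [qNot, qgeval, qgeval_qBot, gimp, le_antisymm_iff, hα, and_true]

lemma qgeval_qDelta (α : QGForm) :
    qgeval μ v (qDelta α) = if 1 ≤ qgeval μ v α then 1 else 0 := by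
  simp only [qDelta, qgeval, qgeval_qTop, qgeval_qBot, gcoimp, gimp]
  split_ifs <;> norm_num at *

lemma one_le_qgeval_qIff_iff {α β : QGForm} (hα : qgeval μ v α ≤ 1) (hβ : qgeval μ v β ≤ 1) :
    1 ≤ qgeval μ v (qIff α β) ↔ qgeval μ v α = qgeval μ v β := by
  simp only [qIff, qgeval, le_min_iff, one_le_gimp_iff hα, one_le_gimp_iff hβ, le_antisymm_iff]

/-- On a `[0,1]`-valued `μ`, `~_G` and `△` are two-valued, so `disj0` holds in a model exactly
when the classical implication between their arguments does. -/
lemma qgeval_disjZero_eq_one_iff (hμ : ∀ X : Set W, μ X ∈ Set.Icc (0 : ℝ) 1) :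
    qgeval μ v disjZero = 1 ↔ (μ (v 0) = 0 → μ (v 0 ∪ v 1) = μ (v 1)) := by
  have ha : 0 ≤ qgeval μ v (.bel pa) := (hμ _).1
  have hb : qgeval μ v (.bel pb) ≤ 1 := (hμ _).2
  have hc : qgeval μ v (.bel (cpOr pa pb)) ≤ 1 := (hμ _).2
  rw [disjZero, qgeval, qgeval_qNot μ v ha, qgeval_qDelta,
    gimp_ite_eq_one_iff, one_le_qgeval_qIff_iff μ v hb hc]
  simp only [qgeval, cpset_cpOr, pa, pb, cpset, eq_comm]

end Semantics

theorem disjZero_correspondence_general (W : Type) (μ : Set W → ℝ)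
    (hμ : IsUncertainty μ) :
    QGValidOnFrame μ disjZero ↔
      ∀ Y Y' : Set W, μ Y = 0 → μ (Y ∪ Y') = μ Y' := by
  simp only [QGValidOnFrame, qgeval_disjZero_eq_one_iff μ _ hμ.1]
  refine ⟨fun h Y Y' => ?_, fun h v => h (v 0) (v 1)⟩
  simpa using h fun n => if n = 0 then Y else Y'

/-- an uncertainty frame validates `disj0` iff for all `Y, Y' ⊆ W`:
`μ(Y) = 0` implies `μ(Y∪Y') = μ(Y')`. -/
theorem disjZero_correspondence (W : Type) (_ : Nonempty W) (μ : Set W → ℝ)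
    (hμ : IsUncertainty μ) :
    QGValidOnFrame μ disjZero ↔
      ∀ Y Y' : Set W, μ Y = 0 → μ (Y ∪ Y') = μ Y' :=
  disjZero_correspondence_general W μ hμ
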